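/- arXiv:1011.0548 — 6 statements merged into one kernel-verified Lean document; each statement's English description precedes it below -/
import Mathlib

section
/- For all real T > 0 and all t with 0 < t < T, define σ²(t) = t·(1 + (T-t)/T) + 2(T-t)·log((T-t)/T). Then σ²(t) < t²/T. -/
theorem var_ir_lt_var_av (T t : ℝ) (hT : 0 < T) (ht : 0 < t) (htT : t < T) :
    t * (1 + (T - t) / T) + 2 * (T - t) * Real.log ((T - t) / T) < t ^ 2 / T := by
  have hx : 0 < (T - t) / T := div_pos (sub_pos.2 htT) hT
  have hx_ne_one : (T - t) / T ≠ 1 := by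
    rw [ne_eq, div_eq_one_iff_eq hT.ne']
    linarith
  -- `t ^ 2 / T` is the left side with `log x` replaced by `x - 1`, where `x = (T - t) / T`.
  have h_sq : t ^ 2 / T = t * (1 + (T - t) / T) + 2 * (T - t) * ((T - t) / T - 1) := by
    field_simp
    ring
  have h_log := mul_lt_mul_of_pos_left (Real.log_lt_sub_one_of_pos hx hx_ne_one)
    (by linarith : (0 : ℝ) < 2 * (T - t))
  linarith
end

section
/- For fixed μ ∈ ℝ, the function σ ↦ 2σ·Φ'(μ/σ) + μ·(2Φ(μ/σ) − 1) is strictly increasing on (0,∞), where Φ is the standard normal CDF and Φ' its density. Consequently, if Y₁ ~ N(μ,σ₁²) and Y₂ ~ N(μ,σ₂²) with 0 < σ₁ < σ₂, then E|Y₁| < E|Y₂|. -/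
/-!
Writing `Y = μ + σ Z` with `Z` standard normal, `E|Y| = ∫ |σ z + μ| φ(z) dz`. Splitting the
integral at `z = -μ/σ`, reflecting the left half, and using `φ' = -z φ` and `φ(-z) = φ(z)` gives
`E|Y| = 2σ φ(μ/σ) + μ (2Φ(μ/σ) - 1)`. Differentiating in `σ`, the contributions of `φ(μ/σ)` and
of `Φ(μ/σ)` through the inner derivative `-μ/σ²` cancel, leaving the derivative `2 φ(μ/σ) > 0`.
-/

open MeasureTheory ProbabilityTheory Real Set
open scoped NNReal

namespace ProbabilityTheory

lemma hasDerivAt_gaussianPDFReal (m : ℝ) (v : ℝ≥0) (x : ℝ) :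
    HasDerivAt (gaussianPDFReal m v) (-(x - m) / v * gaussianPDFReal m v x) x := by
  have h : HasDerivAt (fun y => -(y - m) ^ 2 / (2 * v)) (-(x - m) / v) x :=
    ((((hasDerivAt_id' x).sub_const m).pow 2).neg.div_const (2 * (v : ℝ))).congr_deriv
      (by push_cast; ring)
  exact (h.exp.const_mul _).congr_deriv (by rw [gaussianPDFReal_def]; ring)

lemma integrable_mul_gaussianPDFReal (m : ℝ) (v : ℝ≥0) :
    Integrable fun x => x * gaussianPDFReal m v x := by
  rcases eq_or_ne v 0 with rfl | hv
  · simp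
  have h := (memLp_id_gaussianReal (μ := m) (v := v) 1).integrable le_rfl
  rw [gaussianReal_of_var_ne_zero _ hv, integrable_withDensity_iff_integrable_smul'
    (measurable_gaussianPDF _ _) (ae_of_all _ fun _ => gaussianPDF_lt_top)] at h
  simpa [toReal_gaussianPDF, mul_comm] using h

lemma integrable_affine_mul_gaussianPDFReal (m : ℝ) (v : ℝ≥0) (a b : ℝ) :
    Integrable fun x => (a * x + b) * gaussianPDFReal m v x := by
  simp_rw [add_mul, mul_assoc]
  exact ((integrable_mul_gaussianPDFReal m v).const_mul a).add
    ((integrable_gaussianPDFReal m v).const_mul b)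

lemma gaussianPDFReal_zero_neg (v : ℝ≥0) (x : ℝ) :
    gaussianPDFReal 0 v (-x) = gaussianPDFReal 0 v x := by
  simp [gaussianPDFReal]

lemma gaussianReal_zero_one_map_affine (μ σ : ℝ) :
    (gaussianReal 0 1).map (fun z => σ * z + μ) = gaussianReal μ ⟨σ ^ 2, sq_nonneg σ⟩ := by
  rw [show (fun z : ℝ => σ * z + μ) = (· + μ) ∘ (σ * ·) from rfl,
    ← Measure.map_map (measurable_add_const μ) (measurable_const_mul σ),
    gaussianReal_map_const_mul, gaussianReal_map_add_const]
  congr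
  · simp
  · exact mul_one _

end ProbabilityTheory

noncomputable def stdNormalCDF (t : ℝ) : ℝ := ∫ z in Iic t, gaussianPDFReal 0 1 z

lemma gaussianPDFReal_zero_one (z : ℝ) :
    gaussianPDFReal 0 1 z = 1 / √(2 * π) * exp (-z ^ 2 / 2) := by
  simp [gaussianPDFReal]

lemma hasDerivAt_stdNormalCDF (t : ℝ) : HasDerivAt stdNormalCDF (gaussianPDFReal 0 1 t) t := by
  have hφ := integrable_gaussianPDFReal 0 1
  have hcont : Continuous (gaussianPDFReal 0 1) := by unfold gaussianPDFReal; fun_prop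
  have hsplit : ∀ s, stdNormalCDF s = stdNormalCDF 0 + ∫ z in (0 : ℝ)..s, gaussianPDFReal 0 1 z :=
    fun s => by
      rw [← intervalIntegral.integral_Iic_sub_Iic hφ.integrableOn hφ.integrableOn, stdNormalCDF,
        stdNormalCDF, add_sub_cancel]
  rw [funext hsplit]
  exact (intervalIntegral.integral_hasDerivAt_right hφ.intervalIntegrable
    hcont.stronglyMeasurable.stronglyMeasurableAtFilter hcont.continuousAt).const_add _

lemma integral_Ioi_gaussianPDFReal_zero_one (a : ℝ) :
    ∫ z in Ioi a, gaussianPDFReal 0 1 z = stdNormalCDF (-a) := by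
  rw [stdNormalCDF, ← integral_comp_neg_Ioi]
  simp_rw [gaussianPDFReal_zero_neg]

lemma stdNormalCDF_neg (t : ℝ) : stdNormalCDF (-t) = 1 - stdNormalCDF t := by
  have hφ := integrable_gaussianPDFReal 0 1
  rw [← integral_Ioi_gaussianPDFReal_zero_one, ← integral_gaussianPDFReal_eq_one 0 one_ne_zero,
    ← intervalIntegral.integral_Iic_add_Ioi hφ.integrableOn hφ.integrableOn, stdNormalCDF,
    add_sub_cancel_left]

lemma integral_Ioi_mul_gaussianPDFReal_zero_one (a : ℝ) :
    ∫ z in Ioi a, z * gaussianPDFReal 0 1 z = gaussianPDFReal 0 1 a := by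
  have hderiv : ∀ x, HasDerivAt (-gaussianPDFReal 0 1) (x * gaussianPDFReal 0 1 x) x :=
    fun x => by simpa using (hasDerivAt_gaussianPDFReal 0 1 x).neg
  have hint := (integrable_mul_gaussianPDFReal 0 1).integrableOn (s := Ioi a)
  have hlim := tendsto_zero_of_hasDerivAt_of_integrableOn_Ioi (fun x _ => hderiv x) hint
    (integrable_gaussianPDFReal 0 1).neg.integrableOn
  simpa using integral_Ioi_of_hasDerivAt_of_tendsto' (fun x _ => hderiv x) hint hlim

lemma integral_Ioi_affine_mul_gaussianPDFReal_zero_one (σ c a : ℝ) :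
    ∫ z in Ioi a, (σ * z + c) * gaussianPDFReal 0 1 z
      = σ * gaussianPDFReal 0 1 a + c * stdNormalCDF (-a) := by
  simp_rw [add_mul, mul_assoc]
  rw [integral_add ((integrable_mul_gaussianPDFReal 0 1).const_mul σ).integrableOn
    ((integrable_gaussianPDFReal 0 1).const_mul c).integrableOn, integral_const_mul,
    integral_const_mul, integral_Ioi_mul_gaussianPDFReal_zero_one,
    integral_Ioi_gaussianPDFReal_zero_one]

noncomputable def gaussianAbsMean (μ σ : ℝ) : ℝ :=
  2 * σ * gaussianPDFReal 0 1 (μ / σ) + μ * (2 * stdNormalCDF (μ / σ) - 1)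

lemma integral_abs_affine_mul_gaussianPDFReal_zero_one (μ : ℝ) {σ : ℝ} (hσ : 0 < σ) :
    ∫ z, |σ * z + μ| * gaussianPDFReal 0 1 z = gaussianAbsMean μ σ := by
  have hint : Integrable fun z => |σ * z + μ| * gaussianPDFReal 0 1 z := by
    refine (integrable_affine_mul_gaussianPDFReal 0 1 σ μ).abs.congr (ae_of_all _ fun z => ?_)
    simp only [abs_mul, abs_of_nonneg (gaussianPDFReal_nonneg 0 1 z)]
  have hleft : ∫ z in Iic (-(μ / σ)), |σ * z + μ| * gaussianPDFReal 0 1 z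
      = σ * gaussianPDFReal 0 1 (μ / σ) - μ * stdNormalCDF (-(μ / σ)) := by
    rw [← integral_comp_neg_Ioi, sub_eq_add_neg, ← neg_mul,
      ← integral_Ioi_affine_mul_gaussianPDFReal_zero_one]
    refine setIntegral_congr_fun measurableSet_Ioi fun z hz => ?_
    have : μ < σ * z := by rwa [mem_Ioi, div_lt_iff₀' hσ] at hz
    rw [gaussianPDFReal_zero_neg, abs_of_nonpos (by linarith)]
    ring
  have hright : ∫ z in Ioi (-(μ / σ)), |σ * z + μ| * gaussianPDFReal 0 1 z
      = σ * gaussianPDFReal 0 1 (μ / σ) + μ * stdNormalCDF (μ / σ) := by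
    have h := integral_Ioi_affine_mul_gaussianPDFReal_zero_one σ μ (-(μ / σ))
    rw [gaussianPDFReal_zero_neg, neg_neg] at h
    rw [← h]
    refine setIntegral_congr_fun measurableSet_Ioi fun z hz => ?_
    have : -μ < σ * z := by rwa [mem_Ioi, neg_div', div_lt_iff₀' hσ] at hz
    rw [abs_of_nonneg (by linarith)]
  rw [← intervalIntegral.integral_Iic_add_Ioi hint.integrableOn hint.integrableOn, hleft, hright,
    stdNormalCDF_neg, gaussianAbsMean]
  ring

lemma integral_abs_gaussianReal (μ : ℝ) {σ : ℝ} (hσ : 0 < σ) :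
    ∫ x, |x| ∂gaussianReal μ ⟨σ ^ 2, sq_nonneg σ⟩ = gaussianAbsMean μ σ := by
  rw [← gaussianReal_zero_one_map_affine,
    integral_map (by fun_prop) continuous_abs.aestronglyMeasurable,
    integral_gaussianReal_eq_integral_smul one_ne_zero]
  simp_rw [smul_eq_mul, mul_comm (gaussianPDFReal 0 1 _)]
  exact integral_abs_affine_mul_gaussianPDFReal_zero_one μ hσ

lemma integral_abs_of_map_eq_gaussianReal {Ω : Type*} [MeasurableSpace Ω] {P : Measure Ω}
    {Y : Ω → ℝ} (μ : ℝ) {σ : ℝ} (hσ : 0 < σ)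
    (hY : P.map Y = gaussianReal μ ⟨σ ^ 2, sq_nonneg σ⟩) :
    ∫ ω, |Y ω| ∂P = gaussianAbsMean μ σ := by
  have hmeas : AEMeasurable Y P :=
    .of_map_ne_zero (by rw [hY]; exact IsProbabilityMeasure.ne_zero (gaussianReal μ _))
  rw [← integral_map hmeas continuous_abs.aestronglyMeasurable, hY, integral_abs_gaussianReal μ hσ]

lemma hasDerivAt_gaussianAbsMean (μ : ℝ) {σ : ℝ} (hσ : σ ≠ 0) :
    HasDerivAt (gaussianAbsMean μ) (2 * gaussianPDFReal 0 1 (μ / σ)) σ := by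
  have hquot : HasDerivAt (fun s => μ / s) (-(μ / σ ^ 2)) σ := by
    simpa [div_eq_mul_inv] using (hasDerivAt_inv hσ).const_mul μ
  have hφ := (hasDerivAt_gaussianPDFReal 0 1 (μ / σ)).comp σ hquot
  have hΦ := (hasDerivAt_stdNormalCDF (μ / σ)).comp σ hquot
  refine ((((hasDerivAt_id' σ).const_mul 2).mul hφ).add
    (((hΦ.const_mul 2).sub_const 1).const_mul μ)).congr_deriv ?_
  simp only [Function.comp_apply, NNReal.coe_one]
  field_simp
  ring

lemma strictMonoOn_gaussianAbsMean (μ : ℝ) : StrictMonoOn (gaussianAbsMean μ) (Ioi 0) := by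
  refine strictMonoOn_of_hasDerivWithinAt_pos (convex_Ioi 0)
    (fun σ hσ => (hasDerivAt_gaussianAbsMean μ (ne_of_gt hσ)).continuousAt.continuousWithinAt)
    (fun σ hσ => (hasDerivAt_gaussianAbsMean μ ?_).hasDerivWithinAt) fun σ _ => ?_
  · rw [interior_Ioi] at hσ
    exact ne_of_gt hσ
  · exact mul_pos two_pos (gaussianPDFReal_pos 0 1 _ one_ne_zero)

theorem abs_moment_strictMono (μ : ℝ) :
    StrictMonoOn (fun σ : ℝ =>
      2 * σ * ((1 / Real.sqrt (2 * Real.pi)) * Real.exp (-(μ / σ) ^ 2 / 2))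
        + μ * (2 * (∫ z in Set.Iic (μ / σ),
            (1 / Real.sqrt (2 * Real.pi)) * Real.exp (-z ^ 2 / 2)) - 1))
      (Set.Ioi 0) ∧
    ∀ {Ω : Type} [MeasurableSpace Ω] (P : Measure Ω), ∀ (_ : IsProbabilityMeasure P),
      ∀ (Y₁ Y₂ : Ω → ℝ) (σ₁ σ₂ : ℝ), 0 < σ₁ → σ₁ < σ₂ →
      P.map Y₁ = gaussianReal μ ⟨σ₁ ^ 2, sq_nonneg σ₁⟩ →
      P.map Y₂ = gaussianReal μ ⟨σ₂ ^ 2, sq_nonneg σ₂⟩ →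
      (∫ ω, |Y₁ ω| ∂P) < ∫ ω, |Y₂ ω| ∂P := by
  refine ⟨?_, fun P _ Y₁ Y₂ σ₁ σ₂ hσ₁ hσ₁₂ hY₁ hY₂ => ?_⟩
  · convert strictMonoOn_gaussianAbsMean μ using 1
    funext σ
    simp only [gaussianAbsMean, stdNormalCDF, gaussianPDFReal_zero_one]
  · have hσ₂ : 0 < σ₂ := hσ₁.trans hσ₁₂
    rw [integral_abs_of_map_eq_gaussianReal μ hσ₁ hY₁, integral_abs_of_map_eq_gaussianReal μ hσ₂ hY₂]
    exact strictMonoOn_gaussianAbsMean μ hσ₁ hσ₂ hσ₁₂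
end

section
/- For all real T > 0 and b, d ∈ ℝ, ∫₀ᵀ [ 2t(T−t)/T + 2((T−t)²/T)·log((T−t)/T) − ((T−t)²/T)·(log((T−t)/T))² + ((d−b)·t/T + d·((T−t)/T)·log((T−t)/T))² ] dt = (7/54)(b−d)²T + (11/54)b²T − (7/54)dbT + (1/27)T². -/
/-!
Substituting `s = (T - t) / T` turns the integral into `T` times an integral over `[0, 1]` of a
polynomial in `s` and `log s`, which is evaluated with the moments
`∫₀¹ sⁿ log s = -1 / (n + 1)²` and `∫₀¹ sⁿ log² s = 2 / (n + 1)³`.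
-/

open Real intervalIntegral Set

lemma continuousOn_mul_log_sq : ContinuousOn (fun x : ℝ ↦ x * log x ^ 2) (Ici 0) := by
  have h : ContinuousOn (fun x : ℝ ↦ 4 * (√x * log √x) ^ 2) (Ici 0) :=
    (continuous_const.mul (continuous_sqrt.mul_log.pow 2)).continuousOn
  refine h.congr fun x (hx : 0 ≤ x) ↦ ?_
  simp only [log_sqrt hx, mul_pow, sq_sqrt hx]
  ring

lemma intervalIntegrable_pow_mul_log (n : ℕ) :
    IntervalIntegrable (fun x : ℝ ↦ x ^ n * log x) MeasureTheory.volume 0 1 :=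
  intervalIntegrable_log'.continuousOn_mul (continuous_pow n).continuousOn

lemma integral_pow_mul_log (n : ℕ) : ∫ x in (0 : ℝ)..1, x ^ n * log x = -1 / (n + 1) ^ 2 := by
  have hn : (n : ℝ) + 1 ≠ 0 := by positivity
  set F : ℝ → ℝ := fun x ↦ x ^ (n + 1) * (log x / (n + 1) - 1 / (n + 1) ^ 2)
  have hF : Continuous F := by
    have : F = fun x ↦ x ^ n * (x * log x) / (n + 1) - x ^ (n + 1) / (n + 1) ^ 2 := by
      ext x; simp only [F]; ring
    rw [this]; fun_prop
  have hF' : ∀ x ∈ Ioo (0 : ℝ) 1, HasDerivAt F (x ^ n * log x) x := fun x hx ↦ by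
    have hx0 : x ≠ 0 := hx.1.ne'
    refine ((hasDerivAt_pow (n + 1) x).mul
      (((hasDerivAt_log hx0).div_const _).sub_const _)).congr_deriv ?_
    field_simp
    push_cast
    ring
  rw [integral_eq_sub_of_hasDerivAt_of_le zero_le_one hF.continuousOn hF'
    (intervalIntegrable_pow_mul_log n)]
  simp [F, neg_div]

noncomputable def powMulLogSqPrimitive (n : ℕ) (x : ℝ) : ℝ :=
  x ^ (n + 1) * (log x ^ 2 / (n + 1) - 2 * log x / (n + 1) ^ 2 + 2 / (n + 1) ^ 3)

lemma hasDerivAt_powMulLogSqPrimitive (n : ℕ) {x : ℝ} (hx : x ≠ 0) :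
    HasDerivAt (powMulLogSqPrimitive n) (x ^ n * log x ^ 2) x := by
  have hn : (n : ℝ) + 1 ≠ 0 := by positivity
  have hlog := hasDerivAt_log hx
  refine ((hasDerivAt_pow (n + 1) x).mul
    ((((hlog.pow 2).div_const _).sub ((hlog.const_mul 2).div_const _)).add_const _)).congr_deriv ?_
  simp only [Pi.sub_apply, Pi.pow_apply]
  field_simp
  push_cast
  ring

lemma continuousOn_powMulLogSqPrimitive (n : ℕ) :
    ContinuousOn (powMulLogSqPrimitive n) (Ici 0) := by
  have : powMulLogSqPrimitive n = fun x ↦ x ^ n * (x * log x ^ 2) / (n + 1)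
      - 2 * x ^ n * (x * log x) / (n + 1) ^ 2 + 2 * x ^ (n + 1) / (n + 1) ^ 3 := by
    ext x; simp only [powMulLogSqPrimitive]; ring
  rw [this]
  have := continuousOn_mul_log_sq
  have := continuous_mul_log
  fun_prop

lemma intervalIntegrable_pow_mul_log_sq (n : ℕ) :
    IntervalIntegrable (fun x : ℝ ↦ x ^ n * log x ^ 2) MeasureTheory.volume 0 1 := by
  have hIoo : Ioo (min 0 1) (max 0 1) = Ioo (0 : ℝ) 1 := by simp
  refine intervalIntegrable_deriv_of_nonneg ((continuousOn_powMulLogSqPrimitive n).mono ?_)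
    (hIoo ▸ fun x hx ↦ hasDerivAt_powMulLogSqPrimitive n hx.1.ne')
    (hIoo ▸ fun x hx ↦ by have := hx.1.le; positivity)
  rw [uIcc_of_le zero_le_one]
  exact Icc_subset_Ici_self

lemma integral_pow_mul_log_sq (n : ℕ) :
    ∫ x in (0 : ℝ)..1, x ^ n * log x ^ 2 = 2 / (n + 1) ^ 3 := by
  rw [integral_eq_sub_of_hasDerivAt_of_le zero_le_one
    ((continuousOn_powMulLogSqPrimitive n).mono Icc_subset_Ici_self)
    (fun x hx ↦ hasDerivAt_powMulLogSqPrimitive n hx.1.ne') (intervalIntegrable_pow_mul_log_sq n)]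
  simp [powMulLogSqPrimitive]

lemma integral_deviation_moment_unit (T b d : ℝ) :
    ∫ s in (0 : ℝ)..1, (2 * T * s * (1 - s) + 2 * T * s ^ 2 * log s - T * s ^ 2 * log s ^ 2
        + ((d - b) * (1 - s) + d * s * log s) ^ 2)
      = T / 27 + (d - b) ^ 2 / 3 - 5 / 18 * d * (d - b) + 2 / 27 * d ^ 2 := by
  have hsplit : ∀ s : ℝ, 2 * T * s * (1 - s) + 2 * T * s ^ 2 * log s - T * s ^ 2 * log s ^ 2
        + ((d - b) * (1 - s) + d * s * log s) ^ 2
      = ((d - b) ^ 2 + 2 * (T - (d - b) ^ 2) * s + ((d - b) ^ 2 - 2 * T) * s ^ 2)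
        + 2 * d * (d - b) * (s ^ 1 * log s) + 2 * (T - d * (d - b)) * (s ^ 2 * log s)
        + (d ^ 2 - T) * (s ^ 2 * log s ^ 2) := fun s ↦ by ring
  have hpoly : IntervalIntegrable (fun s : ℝ ↦ (d - b) ^ 2 + 2 * (T - (d - b) ^ 2) * s
      + ((d - b) ^ 2 - 2 * T) * s ^ 2) MeasureTheory.volume 0 1 :=
    Continuous.intervalIntegrable (by fun_prop) 0 1
  have h1 := intervalIntegrable_pow_mul_log 1
  have h2 := intervalIntegrable_pow_mul_log 2
  have h3 := intervalIntegrable_pow_mul_log_sq 2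
  simp_rw [hsplit]
  rw [integral_add ((hpoly.add (h1.const_mul _)).add (h2.const_mul _)) (h3.const_mul _),
    integral_add (hpoly.add (h1.const_mul _)) (h2.const_mul _),
    integral_add hpoly (h1.const_mul _), integral_const_mul, integral_const_mul,
    integral_const_mul, integral_pow_mul_log, integral_pow_mul_log, integral_pow_mul_log_sq,
    integral_add, integral_add, integral_const_mul, integral_const_mul]
  · rw [integral_const, integral_id, integral_pow, smul_eq_mul]
    push_cast
    ring
  all_goals exact Continuous.intervalIntegrable (by fun_prop) _ _

theorem cond_quad_dev_ir (T b d : ℝ) (hT : 0 < T) :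
    ∫ t in (0:ℝ)..T,
        (2 * t * (T - t) / T + 2 * ((T - t) ^ 2 / T) * Real.log ((T - t) / T)
          - ((T - t) ^ 2 / T) * (Real.log ((T - t) / T)) ^ 2
          + ((d - b) * t / T + d * ((T - t) / T) * Real.log ((T - t) / T)) ^ 2)
      = 7 / 54 * (b - d) ^ 2 * T + 11 / 54 * b ^ 2 * T - 7 / 54 * d * b * T
        + 1 / 27 * T ^ 2 := by
  set g : ℝ → ℝ := fun s ↦ 2 * T * s * (1 - s) + 2 * T * s ^ 2 * log s - T * s ^ 2 * log s ^ 2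
    + ((d - b) * (1 - s) + d * s * log s) ^ 2 with hg
  have hsub : ∀ t : ℝ, 2 * t * (T - t) / T + 2 * ((T - t) ^ 2 / T) * log ((T - t) / T)
      - ((T - t) ^ 2 / T) * (log ((T - t) / T)) ^ 2
      + ((d - b) * t / T + d * ((T - t) / T) * log ((T - t) / T)) ^ 2 = g (1 - t / T) := by
    intro t
    rw [hg, ← one_sub_div hT.ne']
    field_simp
    ring
  simp_rw [hsub]
  rw [integral_comp_sub_div g hT.ne']
  rw [div_self hT.ne', sub_self, zero_div, sub_zero, smul_eq_mul, hg,
    integral_deviation_moment_unit]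
  ring
end

section
/- For all real T > 0 and b, d ∈ ℝ, ∫₀ᵀ [ t²/T − ((2t−T)²/T)·1_{[T/2,T)}(t) + (b·t/T − d·((2t−T)/T)·1_{[T/2,T)}(t))² ] dt = (1/6)(d−b)²T + (1/6)b²T − (1/12)dbT + (1/6)T². -/
/-! On `[0, T/2)` the indicator vanishes and on `[T/2, T)` it equals `1`, so on each half the
integrand is a quadratic polynomial in `t`; the integral splits at `T/2` (the jump points are
null sets) and each half is integrated exactly. -/

open MeasureTheory Set
open scoped Interval

namespace intervalIntegral

theorem integral_piecewise_Ico {E : Type*} [NormedAddCommGroup E] [NormedSpace ℝ E]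
    {μ : Measure ℝ} [NullSingletonClass μ] {f g : ℝ → E} {a b c : ℝ} (hab : a ≤ b) (hbc : b ≤ c)
    (hf : IntervalIntegrable f μ a b) (hg : IntervalIntegrable g μ b c) :
    ∫ t in a..c, (Ico b c).piecewise g f t ∂μ = (∫ t in a..b, f t ∂μ) + ∫ t in b..c, g t ∂μ := by
  have hleft : ∀ᵐ t ∂μ, t ∈ Ι a b → (Ico b c).piecewise g f t = f t := by
    filter_upwards [μ.ae_ne b] with t ht hmem
    rw [uIoc_of_le hab] at hmem
    exact piecewise_eq_of_notMem _ _ _ fun h => ht (le_antisymm hmem.2 h.1)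
  have hright : ∀ᵐ t ∂μ, t ∈ Ι b c → (Ico b c).piecewise g f t = g t := by
    filter_upwards [μ.ae_ne c] with t ht hmem
    rw [uIoc_of_le hbc] at hmem
    exact piecewise_eq_of_mem _ _ _ ⟨hmem.1.le, lt_of_le_of_ne hmem.2 ht⟩
  rw [← integral_congr_ae hleft, ← integral_congr_ae hright]
  refine (integral_add_adjacent_intervals ?_ ?_).symm
  · exact hf.congr_ae (Filter.EventuallyEq.symm <| (ae_restrict_iff' measurableSet_uIoc).2 hleft)
  · exact hg.congr_ae (Filter.EventuallyEq.symm <| (ae_restrict_iff' measurableSet_uIoc).2 hright)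

theorem integral_quadratic (p q r a b : ℝ) :
    ∫ t in a..b, (p + q * t + r * t ^ 2) =
      p * (b - a) + q * (b ^ 2 - a ^ 2) / 2 + r * (b ^ 3 - a ^ 3) / 3 := by
  have hint : ∀ f : ℝ → ℝ, Continuous f → IntervalIntegrable f volume a b :=
    fun f hf => hf.intervalIntegrable a b
  rw [integral_add (hint _ (by fun_prop)) (hint _ (by fun_prop)),
    integral_add (hint _ (by fun_prop)) (hint _ (by fun_prop)),
    integral_const_mul, integral_const_mul, integral_pow, integral_id, integral_const]
  simp only [smul_eq_mul]
  ring

end intervalIntegral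

theorem cond_quad_dev_st (T b d : ℝ) (hT : 0 < T) :
    ∫ t in (0:ℝ)..T,
        (t ^ 2 / T
          - ((2 * t - T) ^ 2 / T) * Set.indicator (Set.Ico (T / 2) T) (fun _ => (1:ℝ)) t
          + (b * t / T
              - d * ((2 * t - T) / T)
                * Set.indicator (Set.Ico (T / 2) T) (fun _ => (1:ℝ)) t) ^ 2)
      = 1 / 6 * (d - b) ^ 2 * T + 1 / 6 * b ^ 2 * T - 1 / 12 * d * b * T
        + 1 / 6 * T ^ 2 := by
  have hT0 : T ≠ 0 := hT.ne'
  set F : ℝ → ℝ := fun t => 0 + 0 * t + (1 / T + b ^ 2 / T ^ 2) * t ^ 2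
  set G : ℝ → ℝ := fun t =>
    (d ^ 2 - T) + (4 + 2 * (b - 2 * d) * d / T) * t + ((b - 2 * d) ^ 2 / T ^ 2 - 3 / T) * t ^ 2
  calc _ = ∫ t in (0:ℝ)..T, (Ico (T / 2) T).piecewise G F t := by
        refine intervalIntegral.integral_congr fun t _ => ?_
        by_cases ht : t ∈ Ico (T / 2) T
        · simp only [indicator_of_mem ht, piecewise_eq_of_mem _ _ _ ht, G]
          field_simp
          ring
        · simp only [indicator_of_notMem ht, piecewise_eq_of_notMem _ _ _ ht, F]
          field_simp
          ring
    _ = (∫ t in (0:ℝ)..T / 2, F t) + ∫ t in T / 2..T, G t :=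
        intervalIntegral.integral_piecewise_Ico (by linarith) (by linarith)
          ((by fun_prop : Continuous F).intervalIntegrable _ _)
          ((by fun_prop : Continuous G).intervalIntegrable _ _)
    _ = _ := by
        simp only [F, G, intervalIntegral.integral_quadratic]
        field_simp
        ring
end

section
/- Let q ≠ 0, T > 0, and define κ(t) = (1 − e^{−2qt})/(2q) for t ∈ ℝ and κ*_T(t) = κ(t)·κ(T)/(κ(T) − κ(t)) for t ∈ [0,T). Then κ*_T is strictly increasing on [0,T) and κ*_T(t) ≥ t for all t ∈ [0,T). -/
lemma core_ineq (x X : ℝ) :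
    x * (Real.exp (-x) - Real.exp (-X)) ≤ (1 - Real.exp (-x)) * (1 - Real.exp (-X)) := by
  have h1 := Real.add_one_le_exp x
  have h2 := Real.add_one_le_exp (-x)
  have hx : Real.exp (-x) * Real.exp x = 1 := by rw [← Real.exp_add]; simp
  have hX : 0 < Real.exp (-X) := Real.exp_pos _
  have hxx : 0 < Real.exp (-x) := Real.exp_pos _
  have h3 : (x + 1) * Real.exp (-x) ≤ 1 := by nlinarith
  nlinarith [mul_nonneg hX.le (by linarith : (0:ℝ) ≤ Real.exp (-x) + x - 1)]

theorem time_change_props (q T : ℝ) (hq : q ≠ 0) (hT : 0 < T) :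
    StrictMonoOn (fun t : ℝ =>
        ((1 - Real.exp (-2 * q * t)) / (2 * q)) * ((1 - Real.exp (-2 * q * T)) / (2 * q))
          / ((1 - Real.exp (-2 * q * T)) / (2 * q) - (1 - Real.exp (-2 * q * t)) / (2 * q)))
      (Set.Ico 0 T) ∧
    ∀ t ∈ Set.Ico (0:ℝ) T,
      t ≤ ((1 - Real.exp (-2 * q * t)) / (2 * q)) * ((1 - Real.exp (-2 * q * T)) / (2 * q))
            / ((1 - Real.exp (-2 * q * T)) / (2 * q) - (1 - Real.exp (-2 * q * t)) / (2 * q)) := by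
  have hq2 : (2 * q) ≠ 0 := mul_ne_zero two_ne_zero hq
  have kmono : ∀ s t : ℝ, s < t →
      (1 - Real.exp (-(2 * q * s))) / (2 * q) < (1 - Real.exp (-(2 * q * t))) / (2 * q) := by
    intro s t h
    have key : (0:ℝ) < (1 - Real.exp (-(2 * q * t))) / (2 * q)
        - (1 - Real.exp (-(2 * q * s))) / (2 * q) := by
      have heq : (1 - Real.exp (-(2 * q * t))) / (2 * q)
          - (1 - Real.exp (-(2 * q * s))) / (2 * q)
          = (Real.exp (-(2 * q * s)) - Real.exp (-(2 * q * t))) / (2 * q) := by ring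
      rw [heq]
      rcases hq.lt_or_gt with hneg | hpos
      · apply div_pos_of_neg_of_neg
        · have hlt : -(2 * q * s) < -(2 * q * t) := by nlinarith
          have := Real.exp_lt_exp.mpr hlt; linarith
        · linarith
      · apply div_pos
        · have hlt : -(2 * q * t) < -(2 * q * s) := by nlinarith
          have := Real.exp_lt_exp.mpr hlt; linarith
        · linarith
    linarith
  have hgap : ∀ t : ℝ, t < T →
      0 < (1 - Real.exp (-(2 * q * T))) / (2 * q) - (1 - Real.exp (-(2 * q * t))) / (2 * q) :=
    fun t h => sub_pos.mpr (kmono t T h)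
  have hTpos : 0 < (1 - Real.exp (-(2 * q * T))) / (2 * q) := by
    have := kmono 0 T hT
    simpa using this
  simp only [neg_mul]
  constructor
  · intro s hs t ht hst
    dsimp only
    have g1 := hgap s hs.2
    have g2 := hgap t ht.2
    set a := (1 - Real.exp (-(2 * q * T))) / (2 * q) with ha
    have idrw : ∀ b : ℝ, a - b ≠ 0 → b * a / (a - b) = a * a / (a - b) - a := by
      intro b hb; field_simp; ring
    rw [idrw _ (ne_of_gt g1), idrw _ (ne_of_gt g2)]
    have hlt : a - (1 - Real.exp (-(2 * q * t))) / (2 * q)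
        < a - (1 - Real.exp (-(2 * q * s))) / (2 * q) :=
      sub_lt_sub_left (kmono s t hst) a
    have := div_lt_div_of_pos_left (by positivity : (0:ℝ) < a * a) g2 hlt
    linarith
  · intro t ht
    have g := hgap t ht.2
    rw [le_div_iff₀ g]
    have core := core_ineq (2 * q * t) (2 * q * T)
    have hsq : (0:ℝ) < (2 * q) ^ 2 := by positivity
    have h1 : t * ((1 - Real.exp (-(2 * q * T))) / (2 * q)
        - (1 - Real.exp (-(2 * q * t))) / (2 * q))
        = (2 * q * t) * (Real.exp (-(2 * q * t)) - Real.exp (-(2 * q * T))) / (2 * q) ^ 2 := by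
      field_simp; ring
    have h2 : (1 - Real.exp (-(2 * q * t))) / (2 * q)
        * ((1 - Real.exp (-(2 * q * T))) / (2 * q))
        = (1 - Real.exp (-(2 * q * t))) * (1 - Real.exp (-(2 * q * T))) / (2 * q) ^ 2 := by
      rw [div_mul_div_comm, ← sq]
    rw [h1, h2]
    exact div_le_div_of_nonneg_right core hsq.le
end

section
/- Let q > 0, T > 0, 0 < t < T. Define g̃_q(t) = 1 − e^{qt} + e^{−2q(T−t)} − e^{−2qT+qt} + qt·e^{qt}·(1 − e^{−2qT}). Then g̃_q(t) > 0. -/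
/-!
With `x = q t`, `E = e^x` and `D = e^{-2qT}`, the expression equals
`(1 - (1 - x) E) + D E (E - (1 + x))`, and both summands are positive because
`e^{-x} > 1 - x` and `e^x > 1 + x` for `x ≠ 0`.
-/

open Real

lemma Real.one_sub_mul_exp_lt_one {x : ℝ} (hx : x ≠ 0) : (1 - x) * exp x < 1 := by
  calc (1 - x) * exp x < exp (-x) * exp x := by gcongr; exact one_sub_lt_exp_neg hx
    _ = 1 := by rw [← exp_add, neg_add_cancel, exp_zero]

theorem g_tilde_pos_pos_q_general (q T t : ℝ) (hq : 0 < q) (ht : 0 < t) :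
    0 < 1 - Real.exp (q * t) + Real.exp (-2 * q * (T - t)) - Real.exp (-2 * q * T + q * t)
        + q * t * Real.exp (q * t) * (1 - Real.exp (-2 * q * T)) := by
  set x := q * t with hx_def
  set D := exp (-2 * q * T)
  have hx : x ≠ 0 := (mul_pos hq ht).ne'
  have hexp : exp (-2 * q * (T - t)) = D * exp x * exp x := by
    rw [← exp_add, ← exp_add, hx_def]; congr 1; ring
  have hsplit : 1 - exp x + D * exp x * exp x - exp (-2 * q * T + x) + x * exp x * (1 - D)
      = (1 - (1 - x) * exp x) + D * exp x * (exp x - (x + 1)) := by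
    rw [exp_add]; ring
  rw [hexp, hsplit]
  have hfirst : 0 < 1 - (1 - x) * exp x := sub_pos.2 (one_sub_mul_exp_lt_one hx)
  have hsecond : 0 < exp x - (x + 1) := sub_pos.2 (add_one_lt_exp hx)
  positivity

theorem g_tilde_pos_pos_q (q T t : ℝ) (hq : 0 < q) (ht : 0 < t) (htT : t < T) :
    0 < 1 - Real.exp (q * t) + Real.exp (-2 * q * (T - t)) - Real.exp (-2 * q * T + q * t)
        + q * t * Real.exp (q * t) * (1 - Real.exp (-2 * q * T)) :=
  g_tilde_pos_pos_q_general q T t hq ht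
end
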